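/- Let T, m be natural numbers, let B₁, ε > 0 and K ≥ 1, L ≥ 1 be reals, let S : Fin T → Finset (Fin m) with |S(t)| ≤ K for all t, and define counters N(t,i) = |{s < t : i ∈ S(s)}|. Let Δ : Fin T → ℝ be nonnegative and δ : Fin m → ℝ be positive with δ(i) ≤ Δ(t) whenever i ∈ S(t) and Δ(t) > 0. Suppose that for every round t with Δ(t) > 0 we have Δ(t) ≤ B₁·∑_{i∈S(t)} (4·√(L/(N(t,i)+1)) + 24·K·L³/((N(t,i)+1)·ε)). Then ∑_{t=0}^{T−1} Δ(t) ≤ ∑_{i=0}^{m−1} (16·B₁·√(L·(N*(i)+1)) + (48·B₁·K·L³/ε)·(1 + ln(N*(i)+1))), where N*(i) = max(256·B₁²·K²·L/δ(i)², 96·B₁·K²·L³/(ε·δ(i))). -/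

import Mathlib

open Finset Real

/-!
Split the width sum of each round into arms that are still under-explored (count below
`⌊N*(i)⌋ + 1`) and saturated ones. Past `N*(i)` an arm's width is at most
`δ(i) / (2 B₁ K) ≤ Δ(t) / (2 B₁ K)`, so the at most `K` saturated arms contribute at most
`Δ(t) / 2`, and `Δ(t)` is at most twice the under-explored part. Summing over rounds and exchanging the sums,
arm `i` is charged at most once at each count `0, 1, …, ⌊N*(i)⌋`, because its count strictly
increases whenever it is played; the partial sums of `1/√(n+1)` and `1/(n+1)` then give the
square-root and logarithmic terms.
-/

lemma sum_range_inv_sqrt_succ_le (n : ℕ) :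
    ∑ k ∈ range n, (√((k : ℝ) + 1))⁻¹ ≤ 2 * √n := by
  induction n with
  | zero => simp
  | succ n ih =>
    have hpos : 0 < √((n : ℝ) + 1) := sqrt_pos.mpr (by positivity)
    -- `√n · √(n+1) ≤ n + 1/2` (AM-GM), i.e. `1/√(n+1) ≤ 2√(n+1) - 2√n`
    have step : (√((n : ℝ) + 1))⁻¹ ≤ 2 * √((n : ℝ) + 1) - 2 * √n := by
      rw [inv_le_iff_one_le_mul₀' hpos]
      nlinarith [sq_sqrt (Nat.cast_nonneg (α := ℝ) n), sq_sqrt (by positivity : (0 : ℝ) ≤ n + 1),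
        sq_nonneg (√((n : ℝ) + 1) - √n)]
    rw [sum_range_succ]
    push_cast
    linarith

lemma sum_range_inv_succ_le (n : ℕ) : ∑ k ∈ range n, ((k : ℝ) + 1)⁻¹ ≤ 1 + log n := by
  simpa [harmonic] using harmonic_le_one_add_log n

/-- Confidence width of an arm pulled `n` times: a sub-Gaussian part and a Laplace-noise part,
with `L` playing the role of `ln T`. -/
noncomputable def confWidth (K L ε : ℝ) (n : ℕ) : ℝ :=
  4 * √(L / ((n : ℝ) + 1)) + 24 * K * L ^ 3 / (((n : ℝ) + 1) * ε)

noncomputable def explorationThreshold (B₁ K L ε d : ℝ) : ℝ :=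
  max (256 * B₁ ^ 2 * K ^ 2 * L / d ^ 2) (96 * B₁ * K ^ 2 * L ^ 3 / (ε * d))

section ConfWidth

variable {B₁ K L ε : ℝ}

lemma explorationThreshold_nonneg (hL : 0 ≤ L) (d : ℝ) : 0 ≤ explorationThreshold B₁ K L ε d :=
  le_max_of_le_left (by positivity)

lemma confWidth_nonneg (hK : 0 ≤ K) (hL : 0 ≤ L) (hε : 0 ≤ ε) (n : ℕ) :
    0 ≤ confWidth K L ε n := by
  unfold confWidth
  positivity

lemma sum_range_confWidth_le (hK : 0 ≤ K) (hL : 0 ≤ L) (hε : 0 ≤ ε) (n : ℕ) :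
    ∑ k ∈ range n, confWidth K L ε k ≤ 8 * √(L * n) + 24 * K * L ^ 3 / ε * (1 + log n) := by
  have hsplit : ∀ k : ℕ, confWidth K L ε k
      = 4 * √L * (√((k : ℝ) + 1))⁻¹ + 24 * K * L ^ 3 / ε * ((k : ℝ) + 1)⁻¹ := fun k => by
    rw [confWidth, sqrt_div hL, mul_comm _ ε, ← div_div]
    ring
  calc ∑ k ∈ range n, confWidth K L ε k
      = 4 * √L * ∑ k ∈ range n, (√((k : ℝ) + 1))⁻¹
        + 24 * K * L ^ 3 / ε * ∑ k ∈ range n, ((k : ℝ) + 1)⁻¹ := by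
        simp only [hsplit, sum_add_distrib, mul_sum]
    _ ≤ 4 * √L * (2 * √n) + 24 * K * L ^ 3 / ε * (1 + log n) := by
        gcongr
        exacts [sum_range_inv_sqrt_succ_le n, sum_range_inv_succ_le n]
    _ = 8 * √(L * n) + 24 * K * L ^ 3 / ε * (1 + log n) := by
        rw [sqrt_mul hL]
        ring

lemma sum_range_floor_confWidth_le (hK : 0 ≤ K) (hL : 0 ≤ L) (hε : 0 ≤ ε) {g : ℝ} (hg : 0 ≤ g) :
    ∑ k ∈ range (⌊g⌋₊ + 1), confWidth K L ε k
      ≤ 8 * √(L * (g + 1)) + 24 * K * L ^ 3 / ε * (1 + log (g + 1)) := by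
  have hfloor : (⌊g⌋₊ : ℝ) + 1 ≤ g + 1 := by linarith [Nat.floor_le hg]
  calc ∑ k ∈ range (⌊g⌋₊ + 1), confWidth K L ε k
      ≤ 8 * √(L * (⌊g⌋₊ + 1 : ℕ)) + 24 * K * L ^ 3 / ε * (1 + log (⌊g⌋₊ + 1 : ℕ)) :=
        sum_range_confWidth_le hK hL hε _
    _ ≤ 8 * √(L * (g + 1)) + 24 * K * L ^ 3 / ε * (1 + log (g + 1)) := by
        push_cast
        gcongr

lemma confWidth_le_of_explorationThreshold_le (hB : 0 < B₁) (hK : 0 < K)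
    (hε : 0 < ε) {d : ℝ} (hd : 0 < d) {n : ℕ} (hn : explorationThreshold B₁ K L ε d ≤ n) :
    confWidth K L ε n ≤ d / (2 * B₁ * K) := by
  have hn₁ : 256 * B₁ ^ 2 * K ^ 2 * L ≤ n * d ^ 2 :=
    (div_le_iff₀ (by positivity)).mp ((le_max_left _ _).trans hn)
  have hn₂ : 96 * B₁ * K ^ 2 * L ^ 3 ≤ n * (ε * d) :=
    (div_le_iff₀ (by positivity)).mp ((le_max_right _ _).trans hn)
  have hsqrt : √(L / (n + 1)) ≤ d / (16 * B₁ * K) := by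
    refine sqrt_le_iff.mpr ⟨by positivity, ?_⟩
    rw [div_pow, div_le_div_iff₀ (by positivity) (by positivity)]
    nlinarith [sq_nonneg d]
  have hnoise : 24 * K * L ^ 3 / ((n + 1) * ε) ≤ d / (4 * B₁ * K) := by
    rw [div_le_div_iff₀ (by positivity) (by positivity)]
    nlinarith [mul_pos hε hd]
  calc confWidth K L ε n ≤ 4 * (d / (16 * B₁ * K)) + d / (4 * B₁ * K) := by
        unfold confWidth
        gcongr
    _ = d / (2 * B₁ * K) := by
        field_simp
        ring

end ConfWidth

section PullCount

variable {ι α : Type*} [Fintype ι] [LinearOrder ι] [DecidableEq α] (S : ι → Finset α)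

def pullCount (t : ι) (i : α) : ℕ := #{s | s < t ∧ i ∈ S s}

lemma pullCount_strictMonoOn (i : α) : StrictMonoOn (pullCount S · i) {t | i ∈ S t} := by
  intro s hs t _ hst
  refine card_lt_card ⟨fun r hr => ?_, fun hsub => ?_⟩
  · simp only [mem_filter, mem_univ, true_and] at hr ⊢
    exact ⟨hr.1.trans hst, hr.2⟩
  · simpa using hsub (by simpa using ⟨hst, hs⟩ : s ∈ ({s | s < t ∧ i ∈ S s} : Finset ι))

lemma sum_filter_pullCount_lt_le {R : Type*} [AddCommMonoid R] [PartialOrder R]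
    [IsOrderedAddMonoid R] (i : α) (M : ℕ) {f : ℕ → R} (hf : ∀ n, 0 ≤ f n) :
    ∑ t with i ∈ S t ∧ pullCount S t i < M, f (pullCount S t i) ≤ ∑ n ∈ range M, f n := by
  have hinj : Set.InjOn (pullCount S · i) ↑({t | i ∈ S t ∧ pullCount S t i < M} : Finset ι) :=
    (pullCount_strictMonoOn S i).injOn.mono fun t ht => (mem_filter.mp (mem_coe.mp ht)).2.1
  rw [← sum_image hinj]
  refine sum_le_sum_of_subset_of_nonneg (fun n hn => ?_) fun n _ _ => hf n
  obtain ⟨t, ht, rfl⟩ := mem_image.mp hn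
  exact mem_range.mpr (mem_filter.mp ht).2.2

lemma sum_le_sum_range_of_le_sum_filter_pullCount_lt {R : Type*} [AddCommMonoid R]
    [PartialOrder R] [IsOrderedAddMonoid R] [Fintype α] (M : α → ℕ) {f : ℕ → R}
    (hf : ∀ n, 0 ≤ f n) {Δ : ι → R}
    (hΔ : ∀ t, Δ t ≤ ∑ i ∈ S t with pullCount S t i < M i, f (pullCount S t i)) :
    ∑ t, Δ t ≤ ∑ i, ∑ n ∈ range (M i), f n :=
  calc ∑ t, Δ t ≤ ∑ t, ∑ i ∈ S t with pullCount S t i < M i, f (pullCount S t i) :=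
        sum_le_sum fun t _ => hΔ t
    _ = ∑ i, ∑ t with i ∈ S t ∧ pullCount S t i < M i, f (pullCount S t i) :=
        sum_comm' fun t i => by simp
    _ ≤ ∑ i, ∑ n ∈ range (M i), f n :=
        sum_le_sum fun i _ => sum_filter_pullCount_lt_le S i (M i) hf

end PullCount

lemma le_two_mul_sum_filter {α : Type*} {s : Finset α} {p : α → Prop} [DecidablePred p]
    {a : α → ℝ} {x K : ℝ} (hK : 0 < K) (hs : (#s : ℝ) ≤ K) (hx : 0 ≤ x)
    (hsum : x ≤ ∑ i ∈ s, a i) (hlarge_le : ∀ i ∈ s, ¬ p i → a i ≤ x / (2 * K)) :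
    x ≤ 2 * ∑ i ∈ s with p i, a i := by
  have hrest : ∑ i ∈ s with ¬ p i, a i ≤ x / 2 :=
    calc ∑ i ∈ s with ¬ p i, a i ≤ #{i ∈ s | ¬ p i} * (x / (2 * K)) := by
          rw [← nsmul_eq_mul]
          exact sum_le_card_nsmul _ _ _ fun i hi =>
            hlarge_le i (mem_filter.mp hi).1 (mem_filter.mp hi).2
      _ ≤ K * (x / (2 * K)) := by
          gcongr
          exact le_trans (by exact_mod_cast card_filter_le _ _) hs
      _ = x / 2 := by field_simp
  rw [← sum_filter_add_sum_filter_not s p] at hsum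
  linarith

lemma le_sum_confWidth_filter_lt_explorationThreshold {α : Type*} {s : Finset α} (n : α → ℕ)
    {δ : α → ℝ} {x B₁ K L ε : ℝ} (hB : 0 < B₁) (hK : 0 < K) (hε : 0 < ε)
    (hδ : ∀ i, 0 < δ i) (hs : (#s : ℝ) ≤ K) (hx : 0 ≤ x) (hδx : ∀ i ∈ s, δ i ≤ x)
    (hbound : x ≤ B₁ * ∑ i ∈ s, confWidth K L ε (n i)) :
    x ≤ ∑ i ∈ s with n i < ⌊explorationThreshold B₁ K L ε (δ i)⌋₊ + 1,
      2 * B₁ * confWidth K L ε (n i) := by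
  rw [← mul_sum, mul_assoc, mul_sum]
  refine le_two_mul_sum_filter hK hs hx (by rwa [← mul_sum]) fun i hi hlarge => ?_
  have hthr : explorationThreshold B₁ K L ε (δ i) ≤ n i :=
    (Nat.lt_floor_add_one _).le.trans (by exact_mod_cast not_lt.mp hlarge)
  calc B₁ * confWidth K L ε (n i) ≤ B₁ * (x / (2 * B₁ * K)) := by
        gcongr
        exact (confWidth_le_of_explorationThreshold_le hB hK hε (hδ i) hthr).trans
          (by gcongr; exact hδx i hi)
    _ = x / (2 * K) := by field_simp

/-- Deterministic core of the regret upper bound for the ε-differentially private CUCB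
algorithm under `B₁`-bounded smoothness: if in every round `t` with positive gap `Δ t`
the gap is bounded by the sum of confidence widths of the played base arms (evaluated at
the current pull counts `N t i`), then the cumulative gap is bounded by a per-arm sum of
confidence widths up to the exploration thresholds
`N*(i) = max (256 B₁² K² L / δ(i)²) (96 B₁ K² L³ / (ε δ(i)))`. -/
theorem stmt13 (T m : ℕ) (B₁ ε K L : ℝ)
    (hB : 0 < B₁) (hε : 0 < ε) (hK : 1 ≤ K) (hL : 1 ≤ L)
    (S : Fin T → Finset (Fin m)) (hcard : ∀ t, ((S t).card : ℝ) ≤ K)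
    (N : Fin T → Fin m → ℕ)
    (hN : ∀ t i, N t i = (Finset.univ.filter (fun s : Fin T => s < t ∧ i ∈ S s)).card)
    (Δ : Fin T → ℝ) (hΔ : ∀ t, 0 ≤ Δ t)
    (δ : Fin m → ℝ) (hδ : ∀ i, 0 < δ i)
    (hδΔ : ∀ t, ∀ i ∈ S t, 0 < Δ t → δ i ≤ Δ t)
    (hbound : ∀ t, 0 < Δ t →
      Δ t ≤ B₁ * ∑ i ∈ S t,
        (4 * Real.sqrt (L / ((N t i : ℝ) + 1)) + 24 * K * L ^ 3 / (((N t i : ℝ) + 1) * ε))) :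
    ∑ t : Fin T, Δ t ≤ ∑ i : Fin m,
      (16 * B₁ * Real.sqrt (L *
          (max (256 * B₁ ^ 2 * K ^ 2 * L / (δ i) ^ 2) (96 * B₁ * K ^ 2 * L ^ 3 / (ε * δ i)) + 1)) +
        (48 * B₁ * K * L ^ 3 / ε) *
          (1 + Real.log
            (max (256 * B₁ ^ 2 * K ^ 2 * L / (δ i) ^ 2) (96 * B₁ * K ^ 2 * L ^ 3 / (ε * δ i)) + 1))) := by
  obtain rfl : N = pullCount S := funext₂ hN
  have hK₀ : 0 < K := by linarith
  have hL₀ : 0 ≤ L := by linarith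
  set g := fun i => explorationThreshold B₁ K L ε (δ i)
  have hround : ∀ t, Δ t ≤ ∑ i ∈ S t with pullCount S t i < ⌊g i⌋₊ + 1,
      2 * B₁ * confWidth K L ε (pullCount S t i) := by
    intro t
    rcases (hΔ t).eq_or_lt with hzero | hpos
    · rw [← hzero]
      exact sum_nonneg fun i _ => mul_nonneg (by positivity) (confWidth_nonneg hK₀.le hL₀ hε.le _)
    · exact le_sum_confWidth_filter_lt_explorationThreshold _ hB hK₀ hε hδ (hcard t) hpos.le
        (fun i hi => hδΔ t i hi hpos) (hbound t hpos)
  calc ∑ t, Δ t ≤ ∑ i, ∑ n ∈ range (⌊g i⌋₊ + 1), 2 * B₁ * confWidth K L ε n :=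
        sum_le_sum_range_of_le_sum_filter_pullCount_lt S _
          (fun n => mul_nonneg (by positivity) (confWidth_nonneg hK₀.le hL₀ hε.le n)) hround
    _ ≤ ∑ i, 2 * B₁ * (8 * √(L * (g i + 1)) + 24 * K * L ^ 3 / ε * (1 + log (g i + 1))) := by
        simp only [← mul_sum]
        gcongr with i
        exact sum_range_floor_confWidth_le hK₀.le hL₀ hε.le (explorationThreshold_nonneg hL₀ _)
    _ = _ := sum_congr rfl fun i _ => by simp only [g, explorationThreshold]; ring
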